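/- Let X₁, X₂ and Y be Banach spaces, let X = X₁ ⊕_∞ X₂, and let T : X → Y be a bounded linear operator. If T is a narrow operator, then the restrictions T₁ and T₂ of T to X₁ and X₂ are narrow operators. -/

import Mathlib

/-- A bounded linear operator `T : X → Y` is *narrow* if for every `x, y` in the unit
sphere of `X`, every continuous linear functional `f` on `X` and every `ε > 0` there is
`z` in the unit sphere with `‖x + z‖ ≥ 2 - ε` and `‖T (y - z)‖ + |f (y - z)| ≤ ε`. -/
def IsNarrow {X Y : Type*} [NormedAddCommGroup X] [NormedSpace ℝ X]
    [NormedAddCommGroup Y] [NormedSpace ℝ Y] (T : X →L[ℝ] Y) : Prop :=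
  ∀ x y : X, ‖x‖ = 1 → ‖y‖ = 1 → ∀ f : X →L[ℝ] ℝ, ∀ ε : ℝ, 0 < ε →
    ∃ z : X, ‖z‖ = 1 ∧ 2 - ε ≤ ‖x + z‖ ∧ ‖T (y - z)‖ + |f (y - z)| ≤ ε

/-!
Fix `x, y` in the unit sphere of `X₁`. Narrowness of `T` at `(x, 0)` and `(y, u)` gives
`a, b` in the unit balls with `‖x + a‖ ≈ 2` and `T (y - a, u - b)` small, but the error `u - b`
in the second coordinate is not small. Feeding `b` back in as the next `u` makes these errors
telescope: after `m` steps, each taken at the normalised current point `x + s / m`, the average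
`w = s / m` of the first coordinates has `‖x + w‖ ≈ 2`, while `T (y - w, 0)` is small up to the
remainder `T (0, b) / m` of size `‖T‖ / m`. Normalising `w` gives the witness for `T₁`;
swapping the summands, an isometry, reduces `T₂` to `T₁`.
-/

open Filter WithLp

section NormedSpace

variable {E Y : Type*} [NormedAddCommGroup E] [NormedSpace ℝ E]
  [NormedAddCommGroup Y] [NormedSpace ℝ Y]

noncomputable def narrowSeminorm (T : E →L[ℝ] Y) (g : E →L[ℝ] ℝ) : Seminorm ℝ E :=
  (normSeminorm ℝ Y).comp T.toLinearMap + (normSeminorm ℝ ℝ).comp g.toLinearMap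

@[simp]
lemma narrowSeminorm_apply (T : E →L[ℝ] Y) (g : E →L[ℝ] ℝ) (w : E) :
    narrowSeminorm T g w = ‖T w‖ + |g w| := by
  simp [narrowSeminorm, Real.norm_eq_abs]

lemma narrowSeminorm_le (T : E →L[ℝ] Y) (g : E →L[ℝ] ℝ) (w : E) :
    narrowSeminorm T g w ≤ (‖T‖ + ‖g‖) * ‖w‖ := by
  rw [narrowSeminorm_apply, add_mul, ← Real.norm_eq_abs]
  exact add_le_add (T.le_opNorm w) (g.le_opNorm w)

lemma le_norm_smul_add_smul {u a : E} {r β δ : ℝ} (hr : 0 ≤ r) (hβr : β ≤ r) (ha : ‖a‖ ≤ 1)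
    (hua : 2 - δ ≤ ‖u + a‖) : (1 - δ) * r + β ≤ ‖r • u + β • a‖ := by
  have hrβ : 0 ≤ r - β := sub_nonneg.2 hβr
  calc (1 - δ) * r + β = r * (2 - δ) - (r - β) * 1 := by ring
    _ ≤ ‖r • (u + a)‖ - ‖(r - β) • a‖ := by
      rw [norm_smul, norm_smul, Real.norm_of_nonneg hr, Real.norm_of_nonneg hrβ]
      gcongr
    _ ≤ ‖r • (u + a) - (r - β) • a‖ := norm_sub_norm_le _ _
    _ = ‖r • u + β • a‖ := by congr 1; module

lemma norm_inv_norm_smul_sub_self {w : E} (hw : w ≠ 0) :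
    ‖‖w‖⁻¹ • w - w‖ = |1 - ‖w‖| := by
  have hw' : ‖w‖ ≠ 0 := norm_ne_zero_iff.2 hw
  have h : (‖w‖⁻¹ - 1) * ‖w‖ = 1 - ‖w‖ := by field_simp
  rw [← h, abs_mul, abs_norm, ← Real.norm_eq_abs, ← norm_smul, sub_smul, one_smul]

lemma IsNarrow.comp_linearIsometryEquiv {F : Type*} [NormedAddCommGroup F] [NormedSpace ℝ F]
    {T : F →L[ℝ] Y} (hT : IsNarrow T) (Φ : E ≃ₗᵢ[ℝ] F) :
    IsNarrow (T.comp Φ.toContinuousLinearEquiv.toContinuousLinearMap) := by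
  intro x y hx hy f ε hε
  obtain ⟨z, hz, hxz, hyz⟩ := hT (Φ x) (Φ y) (by simpa) (by simpa)
    (f.comp Φ.symm.toContinuousLinearEquiv.toContinuousLinearMap) ε hε
  refine ⟨Φ.symm z, by simpa, ?_, ?_⟩
  · simpa [← Φ.norm_map (x + Φ.symm z)] using hxz
  · simpa [map_sub] using hyz

end NormedSpace

section InftySum

variable {X₁ X₂ Y : Type*} [NormedAddCommGroup X₁] [NormedSpace ℝ X₁]
  [NormedAddCommGroup X₂] [NormedSpace ℝ X₂] [NormedAddCommGroup Y] [NormedSpace ℝ Y]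
  {T : WithLp ⊤ (X₁ × X₂) →L[ℝ] Y}

lemma IsNarrow.exists_fst_step (hT : IsNarrow T) (g : WithLp ⊤ (X₁ × X₂) →L[ℝ] ℝ) {x y : X₁}
    (hx : ‖x‖ = 1) (hy : ‖y‖ = 1) {u : X₂} (hu : ‖u‖ ≤ 1) {δ : ℝ} (hδ : 0 < δ) (hδ1 : δ < 1) :
    ∃ a : X₁, ∃ b : X₂, ‖a‖ ≤ 1 ∧ ‖b‖ ≤ 1 ∧ 2 - δ ≤ ‖x + a‖ ∧
      narrowSeminorm T g (toLp ⊤ (y - a, u - b)) ≤ δ := by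
  obtain ⟨z, hz, hxz, hyz⟩ := hT (toLp ⊤ (x, 0)) (toLp ⊤ (y, u)) (by simpa using hx)
    (by simp [prod_norm_eq_sup, hy, hu]) g δ hδ
  rw [prod_norm_eq_sup] at hz hxz
  have hyz' : toLp ⊤ (y - z.fst, u - z.snd) = toLp ⊤ (y, u) - z := rfl
  refine ⟨z.fst, z.snd, hz ▸ le_sup_left, hz ▸ le_sup_right, ?_,
    by rwa [hyz', narrowSeminorm_apply]⟩
  simp only [add_fst, add_snd, toLp_fst, toLp_snd, zero_add] at hxz
  rcases le_sup_iff.1 hxz with h | h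
  · exact h
  · linarith [hz ▸ (le_sup_right : ‖z.snd‖ ≤ ‖z.fst‖ ⊔ ‖z.snd‖)]

lemma IsNarrow.exists_fst_iterate (hT : IsNarrow T) (g : WithLp ⊤ (X₁ × X₂) →L[ℝ] ℝ) {x y : X₁}
    (hx : ‖x‖ = 1) (hy : ‖y‖ = 1) {β δ : ℝ} (hδ : 0 < δ) (hδβ : 2 * δ ≤ β) :
    ∀ k : ℕ, k * β ≤ 1 → ∃ s : X₁, ∃ b : X₂, ‖b‖ ≤ 1 ∧ ‖s‖ ≤ k ∧
      1 + k * (β - 2 * δ) ≤ ‖x + β • s‖ ∧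
      narrowSeminorm T g (toLp ⊤ ((k : ℝ) • y - s, -b)) ≤ k * δ := by
  intro k
  induction k with
  | zero => exact fun _ ↦ ⟨0, 0, by simp, by simp, by simp [hx], by simp [Prod.mk_zero_zero]⟩
  | succ k ih =>
    intro hk
    push_cast at hk ⊢
    have hkβ : k * β ≤ 1 := by nlinarith
    have hδ1 : δ < 1 := by nlinarith
    have hkc : k * (β - 2 * δ) ≤ 1 := by nlinarith
    obtain ⟨s, b, hb, hs, hgrow, hρ⟩ := ih hkβ
    set v := x + β • s
    have hv : 1 ≤ ‖v‖ := le_trans (by nlinarith) hgrow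
    have hv0 : v ≠ 0 := norm_pos_iff.1 (by linarith)
    obtain ⟨a, b', ha, hb', hxa, hρa⟩ :=
      hT.exists_fst_step g (x := ‖v‖⁻¹ • v) (norm_smul_inv_norm (𝕜 := ℝ) hv0) hy hb hδ hδ1
    refine ⟨s + a, b', hb', by linarith [norm_add_le s a], ?_, ?_⟩
    · have := le_norm_smul_add_smul (β := β) (norm_nonneg v) (by nlinarith) ha hxa
      rw [smul_inv_smul₀ (norm_ne_zero_iff.2 hv0)] at this
      have h1δ : 0 ≤ 1 - δ := by linarith
      calc 1 + (k + 1) * (β - 2 * δ) ≤ (1 - δ) * (1 + k * (β - 2 * δ)) + β := by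
            nlinarith [mul_nonneg hδ.le (sub_nonneg.2 hkc)]
        _ ≤ (1 - δ) * ‖v‖ + β := by gcongr
        _ ≤ ‖v + β • a‖ := this
        _ = ‖x + β • (s + a)‖ := by rw [smul_add, add_assoc]
    · have hsplit : toLp ⊤ (((k : ℝ) + 1) • y - (s + a), -b') =
          toLp ⊤ ((k : ℝ) • y - s, -b) + toLp ⊤ (y - a, b - b') := by
        rw [← toLp_add, Prod.mk_add_mk]
        congr 2 <;> module
      rw [hsplit]
      linarith [map_add_le_add (narrowSeminorm T g) (toLp ⊤ ((k : ℝ) • y - s, -b))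
        (toLp ⊤ (y - a, b - b'))]

lemma IsNarrow.exists_fst_average (hT : IsNarrow T) (g : WithLp ⊤ (X₁ × X₂) →L[ℝ] ℝ) {x y : X₁}
    (hx : ‖x‖ = 1) (hy : ‖y‖ = 1) {m : ℕ} (hm : 0 < m) {δ : ℝ} (hδ : 0 < δ)
    (hδm : 2 * δ * m ≤ 1) :
    ∃ w : X₁, ‖w‖ ≤ 1 ∧ 2 - 2 * m * δ ≤ ‖x + w‖ ∧
      narrowSeminorm T g (toLp ⊤ (y - w, 0)) ≤ δ + (‖T‖ + ‖g‖) / m := by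
  have hm' : (m : ℝ) ≠ 0 := by positivity
  obtain ⟨s, b, hb, hs, hgrow, hρ⟩ := hT.exists_fst_iterate g hx hy (β := (m : ℝ)⁻¹) hδ
    (by rwa [← one_div, le_div_iff₀ (by positivity)]) m (by rw [mul_inv_cancel₀ hm'])
  refine ⟨(m : ℝ)⁻¹ • s, ?_, ?_, ?_⟩
  · rw [norm_smul, norm_inv, Real.norm_natCast]
    exact inv_mul_le_one_of_le₀ hs (by positivity)
  · convert hgrow using 1
    field_simp
    ring
  · have hsplit : toLp ⊤ (y - (m : ℝ)⁻¹ • s, (0 : X₂)) =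
        (m : ℝ)⁻¹ • toLp ⊤ ((m : ℝ) • y - s, -b) + (m : ℝ)⁻¹ • toLp ⊤ (0, b) := by
      rw [← toLp_smul, ← toLp_smul, ← toLp_add, Prod.smul_mk, Prod.smul_mk, Prod.mk_add_mk,
        smul_sub, inv_smul_smul₀ hm']
      simp
    have hb' := (narrowSeminorm_le T g (toLp ⊤ (0, b))).trans
      (mul_le_of_le_one_right (by positivity) ((norm_toLp_snd ⊤ X₁ X₂ b).trans_le hb))
    calc narrowSeminorm T g (toLp ⊤ (y - (m : ℝ)⁻¹ • s, 0))
        ≤ (m : ℝ)⁻¹ * (m * δ) + (m : ℝ)⁻¹ * (‖T‖ + ‖g‖) := by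
          rw [hsplit]
          refine (map_add_le_add _ _ _).trans ?_
          simp only [map_smul_eq_mul, norm_inv, Real.norm_natCast]
          gcongr
      _ = δ + (‖T‖ + ‖g‖) / m := by field_simp

theorem IsNarrow.restrict_fst (hT : IsNarrow T) {S : X₁ →L[ℝ] Y}
    (hS : ∀ a : X₁, S a = T (toLp ⊤ (a, 0))) : IsNarrow S := by
  intro x y hx hy f ε hε
  set g := f.comp (fstL ⊤ ℝ X₁ X₂)
  set C := ‖T‖ + ‖g‖
  have hρ (c : X₁) : ‖S c‖ + |f c| = narrowSeminorm T g (toLp ⊤ (c, 0)) := by simp [g, hS]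
  obtain ⟨m, hmC, hm⟩ := (((tendsto_const_div_atTop_nhds_zero_nat C).eventually
    (gt_mem_nhds (half_pos hε))).and (eventually_gt_atTop 0)).exists
  obtain ⟨δ, hδ, hδm, hδε, hδC⟩ : ∃ δ : ℝ, 0 < δ ∧ 4 * m * δ < 1 ∧ 4 * m * δ < ε ∧
      δ + C * (2 * m * δ) < ε / 2 - C / m := by
    refine Eventually.exists_gt
      ((ContinuousAt.eventually_lt (by fun_prop) (by fun_prop) ?_).and
        ((ContinuousAt.eventually_lt (by fun_prop) (by fun_prop) ?_).and
          (ContinuousAt.eventually_lt (by fun_prop) (by fun_prop) ?_)))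
    all_goals simp only [mul_zero, add_zero]; linarith
  obtain ⟨w, hw1, hxw, hρw⟩ := hT.exists_fst_average g hx hy hm hδ (by linarith)
  have hw : 1 - 2 * m * δ ≤ ‖w‖ := by linarith [norm_add_le x w]
  have hw0 : w ≠ 0 := norm_pos_iff.1 (by linarith)
  have hzw : ‖‖w‖⁻¹ • w - w‖ ≤ 2 * m * δ := by
    rw [norm_inv_norm_smul_sub_self hw0, abs_of_nonneg (by linarith)]
    linarith
  refine ⟨‖w‖⁻¹ • w, norm_smul_inv_norm (𝕜 := ℝ) hw0, ?_, ?_⟩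
  · calc 2 - ε ≤ ‖x + w‖ - ‖‖w‖⁻¹ • w - w‖ := by linarith
      _ ≤ ‖x + ‖w‖⁻¹ • w‖ := by
        have := norm_sub_norm_le (x + w) (w - ‖w‖⁻¹ • w)
        rwa [show x + w - (w - ‖w‖⁻¹ • w) = x + ‖w‖⁻¹ • w by abel, norm_sub_rev] at this
  · rw [hρ]
    calc narrowSeminorm T g (toLp ⊤ (y - ‖w‖⁻¹ • w, 0))
        ≤ narrowSeminorm T g (toLp ⊤ (y - w, 0)) +
            narrowSeminorm T g (toLp ⊤ (w - ‖w‖⁻¹ • w, 0)) := by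
          have := map_add_le_add (narrowSeminorm T g) (toLp ⊤ (y - w, (0 : X₂)))
            (toLp ⊤ (w - ‖w‖⁻¹ • w, 0))
          rwa [← toLp_add, Prod.mk_add_mk, sub_add_sub_cancel, add_zero] at this
      _ ≤ (δ + C / m) + C * (2 * m * δ) := by
          gcongr
          refine (narrowSeminorm_le T g _).trans ?_
          rw [norm_toLp_fst, norm_sub_rev]
          gcongr
      _ ≤ ε := by linarith

end InftySum

theorem restrictions_narrow_of_inftySum_general
    {X₁ X₂ Y : Type*}
    [NormedAddCommGroup X₁] [NormedSpace ℝ X₁]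
    [NormedAddCommGroup X₂] [NormedSpace ℝ X₂]
    [NormedAddCommGroup Y] [NormedSpace ℝ Y]
    (T : WithLp ⊤ (X₁ × X₂) →L[ℝ] Y)
    (T₁ : X₁ →L[ℝ] Y) (T₂ : X₂ →L[ℝ] Y)
    (hT₁ : ∀ x₁ : X₁, T₁ x₁ = T ((WithLp.prodContinuousLinearEquiv ⊤ ℝ X₁ X₂).symm (x₁, 0)))
    (hT₂ : ∀ x₂ : X₂, T₂ x₂ = T ((WithLp.prodContinuousLinearEquiv ⊤ ℝ X₁ X₂).symm (0, x₂)))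
    (hT : IsNarrow T) :
    IsNarrow T₁ ∧ IsNarrow T₂ :=
  ⟨hT.restrict_fst hT₁,
    (hT.comp_linearIsometryEquiv (LinearIsometryEquiv.withLpProdComm ⊤ ℝ X₂ X₁)).restrict_fst hT₂⟩

theorem restrictions_narrow_of_inftySum
    {X₁ X₂ Y : Type*}
    [NormedAddCommGroup X₁] [NormedSpace ℝ X₁] [CompleteSpace X₁]
    [NormedAddCommGroup X₂] [NormedSpace ℝ X₂] [CompleteSpace X₂]
    [NormedAddCommGroup Y] [NormedSpace ℝ Y] [CompleteSpace Y]
    (T : WithLp ⊤ (X₁ × X₂) →L[ℝ] Y)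
    (T₁ : X₁ →L[ℝ] Y) (T₂ : X₂ →L[ℝ] Y)
    (hT₁ : ∀ x₁ : X₁, T₁ x₁ = T ((WithLp.prodContinuousLinearEquiv ⊤ ℝ X₁ X₂).symm (x₁, 0)))
    (hT₂ : ∀ x₂ : X₂, T₂ x₂ = T ((WithLp.prodContinuousLinearEquiv ⊤ ℝ X₁ X₂).symm (0, x₂)))
    (hT : IsNarrow T) :
    IsNarrow T₁ ∧ IsNarrow T₂ :=
  restrictions_narrow_of_inftySum_general T T₁ T₂ hT₁ hT₂ hT
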